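/- arXiv:1410.5728 — 4 statements merged into one kernel-verified Lean document; each statement's English description precedes it below -/
import Mathlib

section
/- The space P̃₄ has exactly eight path components, namely the sets P̃₄ₑ = {φ ∈ P̃₄ : e₁a₂ > 0, e₂b₃ > 0 and e₃c₄ > 0} for the eight sign vectors e = (e₁,e₂,e₃) ∈ {−1,1}³, where a₂, b₃, c₄ denote the leading coefficients of the three component polynomials. -/
open Polynomial

/-- `(f, g, h)` defines a polynomial knot: the map `t ↦ (f t, g t, h t)` is injective
and its derivative never vanishes. -/
def IsPolyKnot (f g h : Polynomial ℝ) : Prop :=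
  Function.Injective (fun t : ℝ => (f.eval t, g.eval t, h.eval t)) ∧
  ∀ t : ℝ, ((derivative f).eval t, (derivative g).eval t, (derivative h).eval t)
      ≠ ((0 : ℝ), (0 : ℝ), (0 : ℝ))

/-- First component polynomial of a tuple in `A₄ ≅ ℝ¹²`, with coefficient tuple
`(a₀, a₁, a₂, b₀, b₁, b₂, b₃, c₀, c₁, c₂, c₃, c₄)`. -/
noncomputable def fPoly (x : Fin 12 → ℝ) : Polynomial ℝ :=
  C (x 2) * X ^ 2 + C (x 1) * X + C (x 0)

/-- Second component polynomial of a tuple in `A₄ ≅ ℝ¹²`. -/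
noncomputable def gPoly (x : Fin 12 → ℝ) : Polynomial ℝ :=
  C (x 6) * X ^ 3 + C (x 5) * X ^ 2 + C (x 4) * X + C (x 3)

/-- Third component polynomial of a tuple in `A₄ ≅ ℝ¹²`. -/
noncomputable def hPoly (x : Fin 12 → ℝ) : Polynomial ℝ :=
  C (x 11) * X ^ 4 + C (x 10) * X ^ 3 + C (x 9) * X ^ 2 + C (x 8) * X + C (x 7)

/-- The set `P₄ ⊆ A₄ ≅ ℝ¹²` of tuples defining a polynomial knot `(f, g, h)` with
`deg f < deg g < deg h ≤ 4`. -/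
def P4 : Set (Fin 12 → ℝ) :=
  {x | IsPolyKnot (fPoly x) (gPoly x) (hPoly x) ∧
    (fPoly x).natDegree < (gPoly x).natDegree ∧
    (gPoly x).natDegree < (hPoly x).natDegree ∧ (hPoly x).natDegree ≤ 4}

/-- The set `P̃₄ ⊆ A₄ ≅ ℝ¹²` of tuples defining a polynomial knot `(f, g, h)` with
`deg f = 2`, `deg g = 3`, `deg h = 4`. -/
def Pt4 : Set (Fin 12 → ℝ) :=
  {x | IsPolyKnot (fPoly x) (gPoly x) (hPoly x) ∧
    (fPoly x).natDegree = 2 ∧ (gPoly x).natDegree = 3 ∧ (hPoly x).natDegree = 4}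

/-!
The signs of the leading coefficients `a₂, b₃, c₄` never vanish on `P̃₄`, so by the intermediate
value theorem they are constant along paths. Conversely, reparametrising by `t ↦ t + e` and
composing with unipotent lower-triangular affine maps `(u, v, w) ↦ (u + k₁, v + l u + k₂,
w + m v + n u + k₃)` of `ℝ³` preserve knots, and both come in continuous families starting at the
identity; they deform any knot into the normal form `(a t², b t³ + p t, c t⁴ + q t)`. Since `f`
is even, such a triple is a knot iff `q ≠ 0` or `p b > 0`, a condition that persists along the
straight segment to `(a' t², b' t³ + b' t, c' t⁴)` whenever `a, a'`, `b, b'` and `c, c'` have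
the same signs.
-/

theorem IsPolyKnot.taylor {f g h : ℝ[X]} (hk : IsPolyKnot f g h) (e : ℝ) :
    IsPolyKnot (taylor e f) (taylor e g) (taylor e h) := by
  have hder (p : ℝ[X]) :
      derivative (Polynomial.taylor e p) = Polynomial.taylor e (derivative p) := by
    simp [taylor_apply, derivative_comp]
  refine ⟨fun s t hst => ?_, fun t => ?_⟩
  · simp only [taylor_eval] at hst
    exact add_right_cancel (hk.1 hst)
  · simpa only [hder, taylor_eval] using hk.2 (t + e)

theorem IsPolyKnot.shear {f g h : ℝ[X]} (hk : IsPolyKnot f g h) (l m n k₁ k₂ k₃ : ℝ) :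
    IsPolyKnot (f + C k₁) (g + C l * f + C k₂) (h + C m * g + C n * f + C k₃) := by
  refine ⟨fun s t hst => hk.1 ?_, fun t ht => hk.2 t ?_⟩
  · simp only [eval_add, eval_mul, eval_C, Prod.mk.injEq] at hst ⊢
    obtain ⟨hf, hg, hh⟩ := hst
    have hf' : f.eval s = f.eval t := by linarith
    have hg' : g.eval s = g.eval t := by rw [hf'] at hg; linarith
    exact ⟨hf', hg', by rw [hf', hg'] at hh; linarith⟩
  · simp only [derivative_add, derivative_mul, derivative_C, zero_mul, zero_add, add_zero,
      eval_add, eval_mul, eval_C, Prod.mk.injEq] at ht ⊢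
    obtain ⟨hf, hg, hh⟩ := ht
    rw [hf, mul_zero, add_zero] at hg
    rw [hf, hg, mul_zero, mul_zero, add_zero, add_zero] at hh
    exact ⟨hf, hg, hh⟩

theorem isPolyKnot_normal_iff {a b c p q : ℝ} (ha : a ≠ 0) (hb : b ≠ 0) :
    IsPolyKnot (C a * X ^ 2) (C b * X ^ 3 + C p * X) (C c * X ^ 4 + C q * X) ↔
      q ≠ 0 ∨ 0 < p * b := by
  simp only [IsPolyKnot, Function.Injective, derivative_add, derivative_C_mul_X_pow,
    derivative_C_mul_X, eval_add, eval_mul, eval_C, eval_pow, eval_X, Prod.mk.injEq, ne_eq,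
    not_and, and_imp]
  constructor
  · rintro ⟨hinj, hder⟩
    by_contra! hpq
    obtain ⟨rfl, hpb⟩ := hpq
    rcases hpb.lt_or_eq with hpb | hpb
    · have hpos : 0 < -p / b := by
        rw [show -p / b = -(p * b) / b ^ 2 by field_simp]
        exact div_pos (by linarith) (by positivity)
      set t := Real.sqrt (-p / b)
      have ht : 0 < t := Real.sqrt_pos.2 hpos
      have hbt : b * t ^ 2 = -p := by rw [Real.sq_sqrt hpos.le]; field_simp
      have := @hinj (-t) t (by ring) (by linear_combination (-2 * t) * hbt) (by ring)
      linarith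
    · exact hder 0 (by ring) (by rw [mul_eq_zero.1 hpb |>.resolve_right hb]; ring) (by ring)
  · rintro hpq
    constructor
    · intro s t hf hg hh
      have hst : (s - t) * (s + t) = 0 := mul_left_cancel₀ ha (by linear_combination hf)
      rcases mul_eq_zero.1 hst with h | h
      · linarith
      · obtain rfl : s = -t := by linarith
        by_contra hne
        have ht : 2 * t ≠ 0 := fun ht => hne (by linarith)
        have hq : q = 0 :=
          (mul_eq_zero.1 (by linear_combination -hh : 2 * t * q = 0)).resolve_left ht
        have hbt : b * t ^ 2 + p = 0 :=
          (mul_eq_zero.1 (by linear_combination -hg : 2 * t * (b * t ^ 2 + p) = 0)).resolve_left ht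
        have hpb : p * b = -(b * t) ^ 2 := by linear_combination b * hbt
        rcases hpq with hq' | hpb'
        · exact hq' hq
        · linarith [sq_nonneg (b * t)]
    · intro t hf hg hh
      obtain rfl : t = 0 := by simpa [ha] using hf
      simp only [Nat.cast_ofNat, Nat.add_one_sub_one, ne_eq, OfNat.ofNat_ne_zero, not_false_eq_true,
        zero_pow, mul_zero, zero_add] at hg hh
      rcases hpq with hq | hpb
      · exact hq hh
      · simp [hg] at hpb

theorem Polynomial.natDegree_eq_iff_coeff_ne_zero {R : Type*} [Semiring R] {p : R[X]} {n : ℕ}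
    (hn : n ≠ 0) (hp : p.natDegree ≤ n) : p.natDegree = n ↔ p.coeff n ≠ 0 := by
  refine ⟨fun h => ?_, natDegree_eq_of_le_of_coeff_ne_zero hp⟩
  rw [← h, coeff_natDegree, leadingCoeff_ne_zero]
  rintro rfl
  exact hn (h.symm.trans natDegree_zero)

theorem mem_Pt4_iff {x : Fin 12 → ℝ} :
    x ∈ Pt4 ↔ IsPolyKnot (fPoly x) (gPoly x) (hPoly x) ∧ x 2 ≠ 0 ∧ x 6 ≠ 0 ∧ x 11 ≠ 0 := by
  rw [Pt4, Set.mem_ofPred_eq,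
    natDegree_eq_iff_coeff_ne_zero two_ne_zero (by unfold fPoly; compute_degree),
    natDegree_eq_iff_coeff_ne_zero three_ne_zero (by unfold gPoly; compute_degree),
    natDegree_eq_iff_coeff_ne_zero four_ne_zero (by unfold hPoly; compute_degree)]
  simp [fPoly, gPoly, hPoly]

/-- The coefficient tuple of the reparametrised map `t ↦ φ (t + e)`. -/
def reparam (e : ℝ) (x : Fin 12 → ℝ) : Fin 12 → ℝ :=
  ![x 2 * e ^ 2 + x 1 * e + x 0, 2 * x 2 * e + x 1, x 2,
    x 6 * e ^ 3 + x 5 * e ^ 2 + x 4 * e + x 3, 3 * x 6 * e ^ 2 + 2 * x 5 * e + x 4,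
      3 * x 6 * e + x 5, x 6,
    x 11 * e ^ 4 + x 10 * e ^ 3 + x 9 * e ^ 2 + x 8 * e + x 7,
      4 * x 11 * e ^ 3 + 3 * x 10 * e ^ 2 + 2 * x 9 * e + x 8,
      6 * x 11 * e ^ 2 + 3 * x 10 * e + x 9, 4 * x 11 * e + x 10, x 11]

theorem polys_reparam (e : ℝ) (x : Fin 12 → ℝ) :
    fPoly (reparam e x) = taylor e (fPoly x) ∧ gPoly (reparam e x) = taylor e (gPoly x) ∧
      hPoly (reparam e x) = taylor e (hPoly x) := by
  refine ⟨?_, ?_, ?_⟩ <;>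
  · simp only [fPoly, gPoly, hPoly, reparam, Fin.isValue, Matrix.cons_val, Matrix.cons_val_one,
      Matrix.cons_val_zero, map_add, map_mul, map_ofNat, map_pow, taylor_apply, mul_comp,
      C_comp, pow_comp, X_comp]
    ring

theorem reparam_mem_Pt4 {x : Fin 12 → ℝ} (hx : x ∈ Pt4) (e : ℝ) : reparam e x ∈ Pt4 := by
  obtain ⟨hk, h2, h6, h11⟩ := mem_Pt4_iff.1 hx
  obtain ⟨hf, hg, hh⟩ := polys_reparam e x
  rw [mem_Pt4_iff, hf, hg, hh]
  exact ⟨hk.taylor e, h2, h6, h11⟩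

theorem joinedIn_reparam {x : Fin 12 → ℝ} (hx : x ∈ Pt4) (e : ℝ) :
    JoinedIn Pt4 x (reparam e x) := by
  refine JoinedIn.ofLine (f := fun s => reparam (s * e) x) (by unfold reparam; fun_prop) ?_
    (by simp) (Set.image_subset_iff.2 fun s _ => reparam_mem_Pt4 hx _)
  funext i
  fin_cases i <;> simp [reparam]

/-- The coefficient tuple of `(f + k₁, g + l f + k₂, h + m g + n f + k₃)`, i.e. of `φ` followed by a
unipotent lower-triangular affine map of `ℝ³`. -/
def shear (l m n k₁ k₂ k₃ : ℝ) (x : Fin 12 → ℝ) : Fin 12 → ℝ :=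
  ![x 0 + k₁, x 1, x 2,
    x 3 + l * x 0 + k₂, x 4 + l * x 1, x 5 + l * x 2, x 6,
    x 7 + m * x 3 + n * x 0 + k₃, x 8 + m * x 4 + n * x 1, x 9 + m * x 5 + n * x 2,
      x 10 + m * x 6, x 11]

theorem shear_mem_Pt4 {x : Fin 12 → ℝ} (hx : x ∈ Pt4) (l m n k₁ k₂ k₃ : ℝ) :
    shear l m n k₁ k₂ k₃ x ∈ Pt4 := by
  obtain ⟨hk, h2, h6, h11⟩ := mem_Pt4_iff.1 hx
  refine mem_Pt4_iff.2 ⟨?_, h2, h6, h11⟩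
  convert hk.shear l m n k₁ k₂ k₃ using 1 <;>
  · simp only [fPoly, gPoly, hPoly, shear, Fin.isValue, Matrix.cons_val, Matrix.cons_val_one,
      Matrix.cons_val_zero, map_add, map_mul]
    ring

theorem joinedIn_shear {x : Fin 12 → ℝ} (hx : x ∈ Pt4) (l m n k₁ k₂ k₃ : ℝ) :
    JoinedIn Pt4 x (shear l m n k₁ k₂ k₃ x) := by
  refine JoinedIn.ofLine (f := fun s => shear (s * l) (s * m) (s * n) (s * k₁) (s * k₂) (s * k₃) x)
    (by unfold shear; fun_prop) ?_ (by simp) (Set.image_subset_iff.2 fun s _ => shear_mem_Pt4 hx ..)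
  funext i
  fin_cases i <;> simp [shear]

/-- The coefficient tuple of `(a t², b t³ + p t, c t⁴ + q t)`. -/
def normalForm (a b c p q : ℝ) : Fin 12 → ℝ := ![0, 0, a, 0, p, 0, b, 0, q, 0, 0, c]

theorem normalForm_mem_Pt4_iff {a b c p q : ℝ} :
    normalForm a b c p q ∈ Pt4 ↔ a ≠ 0 ∧ b ≠ 0 ∧ c ≠ 0 ∧ (q ≠ 0 ∨ 0 < p * b) := by
  have hf : fPoly (normalForm a b c p q) = C a * X ^ 2 := by simp [fPoly, normalForm]
  have hg : gPoly (normalForm a b c p q) = C b * X ^ 3 + C p * X := by simp [gPoly, normalForm]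
  have hh : hPoly (normalForm a b c p q) = C c * X ^ 4 + C q * X := by simp [hPoly, normalForm]
  rw [mem_Pt4_iff, hf, hg, hh]
  constructor
  · rintro ⟨hk, ha, hb, hc⟩
    exact ⟨ha, hb, hc, (isPolyKnot_normal_iff ha hb).1 hk⟩
  · rintro ⟨ha, hb, hc, hpq⟩
    exact ⟨(isPolyKnot_normal_iff ha hb).2 hpq, ha, hb, hc⟩

theorem exists_joinedIn_coeff_one_eq_zero {x : Fin 12 → ℝ} (hx : x ∈ Pt4) :
    ∃ y, JoinedIn Pt4 x y ∧ y 1 = 0 ∧ y 2 = x 2 ∧ y 6 = x 6 ∧ y 11 = x 11 := by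
  have h2 : x 2 ≠ 0 := (mem_Pt4_iff.1 hx).2.1
  refine ⟨_, joinedIn_reparam hx (-x 1 / (2 * x 2)), ?_, rfl, rfl, rfl⟩
  simp only [reparam, Matrix.cons_val_one, Matrix.cons_val_zero]
  field_simp
  ring

theorem joinedIn_shear_normalForm {y : Fin 12 → ℝ} (hy : y ∈ Pt4) (hy1 : y 1 = 0) :
    JoinedIn Pt4 y (normalForm (y 2) (y 6) (y 11) (y 4) (y 8 - y 10 / y 6 * y 4)) := by
  obtain ⟨-, hy2, hy6, -⟩ := mem_Pt4_iff.1 hy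
  convert joinedIn_shear hy (-(y 5 / y 2)) (-(y 10 / y 6))
    ((y 10 / y 6 * y 5 - y 9) / y 2) (-y 0) (y 5 / y 2 * y 0 - y 3)
    ((y 9 - y 10 / y 6 * y 5) / y 2 * y 0 + y 10 / y 6 * y 3 - y 7) using 1
  funext i
  fin_cases i <;>
    simp only [normalForm, shear, hy1, Fin.isValue, Fin.zero_eta, Fin.mk_one, Fin.reduceFinMk,
      Matrix.cons_val, Matrix.cons_val_zero, Matrix.cons_val_one, add_neg_cancel, neg_mul, mul_zero,
      add_zero]
  all_goals field_simp
  all_goals ring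

theorem joinedIn_normalForm {a b c p q a' b' c' : ℝ} (h : normalForm a b c p q ∈ Pt4)
    (ha : 0 < a * a') (hb : 0 < b * b') (hc : 0 < c * c') :
    JoinedIn Pt4 (normalForm a b c p q) (normalForm a' b' c' b' 0) := by
  obtain ⟨ha₀, hb₀, hc₀, hpq⟩ := normalForm_mem_Pt4_iff.1 h
  refine JoinedIn.ofLine (f := fun s => normalForm ((1 - s) * a + s * a') ((1 - s) * b + s * b')
    ((1 - s) * c + s * c') ((1 - s) * p + s * b') ((1 - s) * q)) (by unfold normalForm; fun_prop)
    (by simp) (by simp) ?_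
  rintro _ ⟨s, ⟨hs₀, hs₁⟩, rfl⟩
  beta_reduce
  have combo_mul_pos {u v w : ℝ} (hu : 0 < u * w) (hv : 0 < w * v) :
      0 < ((1 - s) * u + s * v) * w := by
    have := convex_Ioi (0 : ℝ) hu hv (sub_nonneg.2 hs₁) hs₀ (by ring)
    simp only [smul_eq_mul, Set.mem_Ioi] at this
    linarith
  have ha_s := combo_mul_pos (mul_self_pos.2 ha₀) ha
  have hb_s := combo_mul_pos (mul_self_pos.2 hb₀) hb
  have hc_s := combo_mul_pos (mul_self_pos.2 hc₀) hc
  refine normalForm_mem_Pt4_iff.2 ⟨left_ne_zero_of_mul ha_s.ne', left_ne_zero_of_mul hb_s.ne',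
    left_ne_zero_of_mul hc_s.ne', ?_⟩
  by_cases hq : q = 0
  · have hp_s := combo_mul_pos (hpq.resolve_left (not_not.2 hq)) hb
    refine Or.inr ((mul_pos_iff_of_pos_right (mul_self_pos.2 hb₀)).1 ?_)
    convert mul_pos hp_s hb_s using 1
    ring
  · rcases hs₁.lt_or_eq with hs₁ | rfl
    · exact Or.inl (mul_ne_zero (by linarith) hq)
    · exact Or.inr (by simpa using mul_self_pos.2 (right_ne_zero_of_mul hb.ne'))

theorem JoinedIn.pos_iff {X : Type*} [TopologicalSpace X] {F : Set X} {x y : X} {φ : X → ℝ}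
    (h : JoinedIn F x y) (hφ : Continuous φ) (hF : ∀ z ∈ F, φ z ≠ 0) : 0 < φ x ↔ 0 < φ y := by
  suffices key : ∀ {x y}, JoinedIn F x y → 0 < φ x → 0 < φ y from ⟨key h, key h.symm⟩
  intro x y ⟨γ, hγ⟩ hx
  by_contra! hy
  obtain ⟨t, ht⟩ := intermediate_value_univ 1 0 (hφ.comp γ.continuous)
    (show (0 : ℝ) ∈ Set.Icc (φ (γ 1)) (φ (γ 0)) by simpa using ⟨hy, hx.le⟩)
  exact hF _ (hγ t) ht

theorem mul_pos_of_pos_iff {α : Type*} [Ring α] [LinearOrder α] [IsStrictOrderedRing α] {a b : α}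
    (ha : a ≠ 0) (hb : b ≠ 0) (h : 0 < a ↔ 0 < b) : 0 < a * b := by
  rcases ha.lt_or_gt with ha | ha
  · exact mul_pos_of_neg_of_neg ha (hb.lt_of_le (not_lt.1 (h.not.1 ha.not_gt)))
  · exact mul_pos ha (h.1 ha)

theorem exists_joinedIn_normalForm {x : Fin 12 → ℝ} (hx : x ∈ Pt4) :
    ∃ p q, JoinedIn Pt4 x (normalForm (x 2) (x 6) (x 11) p q) := by
  obtain ⟨y, hxy, hy1, hy2, hy6, hy11⟩ := exists_joinedIn_coeff_one_eq_zero hx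
  rw [← hy2, ← hy6, ← hy11]
  exact ⟨_, _, hxy.trans (joinedIn_shear_normalForm hxy.target_mem hy1)⟩

/-- `P̃₄` has exactly eight path components, namely the sets
`P̃₄ₑ = {φ ∈ P̃₄ : e₁a₂ > 0, e₂b₃ > 0, e₃c₄ > 0}` for the eight sign vectors
`e ∈ {−1,1}³`: each such set is nonempty, and two points of `P̃₄` are joined by a path
in `P̃₄` if and only if their leading coefficients `a₂ = x 2`, `b₃ = x 6`, `c₄ = x 11`
have matching signs. -/
theorem stmt_14 :
    (∀ e₁ e₂ e₃ : ℝ, (e₁ = 1 ∨ e₁ = -1) → (e₂ = 1 ∨ e₂ = -1) → (e₃ = 1 ∨ e₃ = -1) →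
      ({x ∈ Pt4 | 0 < e₁ * x 2 ∧ 0 < e₂ * x 6 ∧ 0 < e₃ * x 11}).Nonempty) ∧
    ∀ x ∈ Pt4, ∀ y ∈ Pt4,
      (JoinedIn Pt4 x y ↔
        ((0 < x 2 ↔ 0 < y 2) ∧ (0 < x 6 ↔ 0 < y 6) ∧ (0 < x 11 ↔ 0 < y 11))) := by
  refine ⟨fun e₁ e₂ e₃ he₁ he₂ he₃ => ?_, fun x hx y hy => ⟨fun hxy => ?_, fun ⟨h2, h6, h11⟩ => ?_⟩⟩
  · have ne_zero : ∀ e : ℝ, (e = 1 ∨ e = -1) → e ≠ 0 := by rintro e (rfl | rfl) <;> norm_num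
    have h₁ := ne_zero e₁ he₁
    have h₂ := ne_zero e₂ he₂
    have h₃ := ne_zero e₃ he₃
    exact ⟨normalForm e₁ e₂ e₃ e₂ 0,
      normalForm_mem_Pt4_iff.2 ⟨h₁, h₂, h₃, Or.inr (mul_self_pos.2 h₂)⟩,
      mul_self_pos.2 h₁, mul_self_pos.2 h₂, mul_self_pos.2 h₃⟩
  · have hne := fun z (hz : z ∈ Pt4) => (mem_Pt4_iff.1 hz).2
    exact ⟨hxy.pos_iff (continuous_apply 2) fun z hz => (hne z hz).1,
      hxy.pos_iff (continuous_apply 6) fun z hz => (hne z hz).2.1,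
      hxy.pos_iff (continuous_apply 11) fun z hz => (hne z hz).2.2⟩
  · obtain ⟨-, hx2, hx6, hx11⟩ := mem_Pt4_iff.1 hx
    obtain ⟨-, hy2, hy6, hy11⟩ := mem_Pt4_iff.1 hy
    obtain ⟨p, q, hxN⟩ := exists_joinedIn_normalForm hx
    obtain ⟨p', q', hyN⟩ := exists_joinedIn_normalForm hy
    have hxM := joinedIn_normalForm hxN.target_mem (mul_pos_of_pos_iff hx2 hy2 h2)
      (mul_pos_of_pos_iff hx6 hy6 h6) (mul_pos_of_pos_iff hx11 hy11 h11)
    have hyM := joinedIn_normalForm hyN.target_mem (mul_self_pos.2 hy2) (mul_self_pos.2 hy6)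
      (mul_self_pos.2 hy11)
    exact hxN.trans (hxM.trans (hyN.trans hyM).symm)
end

section
/- Let d ≥ 2 and let φ = (f,g,h) ∈ P̃_d be a polynomial knot. Then ψ = (f,g,−h) also lies in P̃_d, and there is no continuous path inside P̃_d from φ to ψ; that is, φ and its mirror image ψ belong to different path components of P̃_d. -/
open Polynomial

/-- The polynomial `v 0 + v 1 • X + ⋯ + v (n-1) • X^(n-1)` determined by a coefficient
vector `v ∈ ℝⁿ`. -/
noncomputable def toPoly {n : ℕ} (v : Fin n → ℝ) : Polynomial ℝ :=
  ∑ i : Fin n, C (v i) * X ^ (i : ℕ)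

/-- The space `A_d ≅ ℝ^{3d}` of coefficient tuples `(a₀,…,a_{d−2}, b₀,…,b_{d−1}, c₀,…,c_d)`
(with the product topology), and inside it the set `P̃_d` of tuples defining a
polynomial knot `(f, g, h)` with `deg f = d−2`, `deg g = d−1` and `deg h = d`. -/
def PtD (d : ℕ) : Set ((Fin (d - 1) → ℝ) × (Fin d → ℝ) × (Fin (d + 1) → ℝ)) :=
  {x | IsPolyKnot (toPoly x.1) (toPoly x.2.1) (toPoly x.2.2) ∧
    (toPoly x.1).natDegree = d - 2 ∧ (toPoly x.2.1).natDegree = d - 1 ∧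
    (toPoly x.2.2).natDegree = d}

lemma toPoly_coeff {n : ℕ} (v : Fin n → ℝ) (k : ℕ) (hk : k < n) :
    (toPoly v).coeff k = v ⟨k, hk⟩ := by
  simp only [toPoly, finset_sum_coeff, coeff_C_mul, coeff_X_pow]
  rw [Finset.sum_eq_single (⟨k, hk⟩ : Fin n)]
  · simp
  · intro b _ hb
    have : k ≠ (b : ℕ) := by
      intro h; exact hb (by ext; exact h.symm)
    simp [this]
  · simp

lemma toPoly_neg {n : ℕ} (v : Fin n → ℝ) : toPoly (-v) = -toPoly v := by
  simp [toPoly, map_neg, neg_mul, Finset.sum_neg_distrib]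

lemma leading_ne_zero {d : ℕ} (hd : 2 ≤ d) {y : (Fin (d - 1) → ℝ) × (Fin d → ℝ) × (Fin (d + 1) → ℝ)}
    (hy : y ∈ PtD d) : y.2.2 ⟨d, Nat.lt_succ_self d⟩ ≠ 0 := by
  obtain ⟨-, -, -, hdeg⟩ := hy
  have hne : toPoly y.2.2 ≠ 0 := by
    intro h0
    rw [h0] at hdeg
    simp at hdeg
    omega
  have h1 := mt leadingCoeff_eq_zero.mp hne
  rwa [leadingCoeff, hdeg, toPoly_coeff y.2.2 d (Nat.lt_succ_self d)] at h1

/-- For `d ≥ 2` and a polynomial knot `φ = (f, g, h) ∈ P̃_d`, the mirror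
image `ψ = (f, g, −h)` also lies in `P̃_d`, and there is no path inside `P̃_d` from `φ`
to `ψ`. -/
theorem stmt_15 (d : ℕ) (hd : 2 ≤ d)
    (x : (Fin (d - 1) → ℝ) × (Fin d → ℝ) × (Fin (d + 1) → ℝ)) (hx : x ∈ PtD d) :
    (x.1, x.2.1, -x.2.2) ∈ PtD d ∧ ¬ JoinedIn (PtD d) x (x.1, x.2.1, -x.2.2) := by
  obtain ⟨⟨hinj, hder⟩, hf, hg, hh⟩ := hx
  have hmem : (x.1, x.2.1, -x.2.2) ∈ PtD d := by
    refine ⟨⟨?_, ?_⟩, hf, hg, ?_⟩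
    · intro t s hts
      simp only [toPoly_neg, eval_neg, Prod.mk.injEq, neg_inj] at hts
      exact hinj (by simp [Prod.ext_iff, hts.1, hts.2.1, hts.2.2])
    · intro t ht
      simp only [toPoly_neg, map_neg, eval_neg, Prod.mk.injEq, neg_eq_zero] at ht
      exact hder t (by simp [Prod.ext_iff, ht.1, ht.2.1, ht.2.2])
    · rw [toPoly_neg, natDegree_neg]; exact hh
  refine ⟨hmem, ?_⟩
  rintro ⟨γ, hγ⟩
  set F : unitInterval → ℝ := fun s => (γ s).2.2 ⟨d, Nat.lt_succ_self d⟩ with hF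
  have hFcont : Continuous F := by
    apply Continuous.comp (continuous_apply _)
    exact (continuous_snd.comp continuous_snd).comp γ.continuous
  have hFne : ∀ s, F s ≠ 0 := fun s => leading_ne_zero hd (hγ s)
  have hF0 : F 0 = x.2.2 ⟨d, Nat.lt_succ_self d⟩ := by simp [hF]
  have hF1 : F 1 = -(x.2.2 ⟨d, Nat.lt_succ_self d⟩) := by simp [hF]
  set c := x.2.2 ⟨d, Nat.lt_succ_self d⟩ with hc
  have hcne : c ≠ 0 := leading_ne_zero hd ⟨⟨hinj, hder⟩, hf, hg, hh⟩
  have h0mem : (0 : ℝ) ∈ F '' Set.univ := by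
    rcases lt_or_gt_of_ne hcne with h | h
    · exact isPreconnected_univ.intermediate_value (Set.mem_univ 0) (Set.mem_univ 1)
        hFcont.continuousOn (Set.mem_Icc.mpr ⟨by rw [hF0]; linarith, by rw [hF1]; linarith⟩)
    · exact isPreconnected_univ.intermediate_value (Set.mem_univ 1) (Set.mem_univ 0)
        hFcont.continuousOn (Set.mem_Icc.mpr ⟨by rw [hF1]; linarith, by rw [hF0]; linarith⟩)
  obtain ⟨s, -, hs⟩ := h0mem
  exact hFne s hs
end

section
/- The map φ : ℝ → ℝ³ given by φ(t) = (t³−3t, t⁴−4t², t⁵−10t) is a polynomial knot: it is injective and its derivative φ′(t) is nonzero for every t ∈ ℝ. -/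
/-!
If `φ(a) = φ(b)` with `a ≠ b`, dividing each coordinate difference by `a - b` gives
`a² + ab + b² = 3`, `(a + b)(a² + b² - 4) = 0` and `a⁴ + a³b + a²b² + ab³ + b⁴ = 10`.
For `b = -a` the first equation gives `a⁴ = 9` while the third says `a⁴ = 10`; for
`a² + b² = 4` the first gives `ab = -1`, and then the third evaluates to `11`.
The derivative `(3t² - 3, 4t³ - 8t, 5t⁴ - 10)` cannot vanish, since `t² = 1` forces
`5t⁴ - 10 = -5`.
-/

lemma deriv_pow_sub_const_mul {𝕜 : Type*} [NontriviallyNormedField 𝕜] (n : ℕ) (c t : 𝕜) :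
    deriv (fun s : 𝕜 => s ^ n - c * s) t = n * t ^ (n - 1) - c := by
  have h : HasDerivAt (fun s : 𝕜 => s ^ n - c * s) (n * t ^ (n - 1) - c * 1) t :=
    (hasDerivAt_pow n t).sub ((hasDerivAt_id t).const_mul c)
  rw [h.deriv, mul_one]

lemma eq_zero_of_sub_mul_eq_zero {R : Type*} [Ring R] [NoZeroDivisors R] {a b q : R}
    (hab : a ≠ b) (h : (a - b) * q = 0) : q = 0 :=
  (mul_eq_zero.mp h).resolve_left (sub_ne_zero.mpr hab)

theorem shastri_trefoil_injective :
    Function.Injective (fun t : ℝ => (t ^ 3 - 3 * t, t ^ 4 - 4 * t ^ 2, t ^ 5 - 10 * t)) := by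
  intro a b h
  simp only [Prod.mk.injEq] at h
  obtain ⟨h₃, h₄, h₅⟩ := h
  by_contra hab
  have e₃ : a ^ 2 + a * b + b ^ 2 - 3 = 0 :=
    eq_zero_of_sub_mul_eq_zero hab (by linear_combination h₃)
  have e₄ : (a + b) * (a ^ 2 + b ^ 2 - 4) = 0 :=
    eq_zero_of_sub_mul_eq_zero hab (by linear_combination h₄)
  have e₅ : a ^ 4 + a ^ 3 * b + a ^ 2 * b ^ 2 + a * b ^ 3 + b ^ 4 - 10 = 0 :=
    eq_zero_of_sub_mul_eq_zero hab (by linear_combination h₅)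
  rcases mul_eq_zero.mp e₄ with hsum | hnorm
  · obtain rfl : b = -a := by linear_combination hsum
    have ha : a ^ 2 = 3 := by linear_combination e₃
    have : (10 : ℝ) = 9 := by linear_combination -e₅ + (a ^ 2 + 3) * ha
    norm_num at this
  · have hprod : a * b = -1 := by linear_combination e₃ - hnorm
    have : (11 : ℝ) = 10 := by
      linear_combination e₅ - (a ^ 2 + b ^ 2 + 4 + a * b) * hnorm + (a * b - 5) * hprod
    norm_num at this

theorem shastri_trefoil_deriv_ne_zero (t : ℝ) :
    (3 * t ^ 2 - 3, 4 * t ^ 3 - 8 * t, 5 * t ^ 4 - 10) ≠ ((0 : ℝ), (0 : ℝ), (0 : ℝ)) := by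
  intro h
  simp only [Prod.mk.injEq] at h
  obtain ⟨h₃, -, h₅⟩ := h
  have ht : t ^ 2 = 1 := by linear_combination h₃ / 3
  have : (-5 : ℝ) = 0 := by linear_combination h₅ - 5 * (t ^ 2 + 1) * ht
  norm_num at this

/-- Shastri's degree-5 representation of the trefoil,
`φ(t) = (t³−3t, t⁴−4t², t⁵−10t)`, is a polynomial knot: it is injective and its
derivative is nonzero for every `t ∈ ℝ`. -/
theorem stmt_18 :
    Function.Injective (fun t : ℝ =>
      (t ^ 3 - 3 * t, t ^ 4 - 4 * t ^ 2, t ^ 5 - 10 * t)) ∧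
    ∀ t : ℝ, (deriv (fun s : ℝ => s ^ 3 - 3 * s) t,
        deriv (fun s : ℝ => s ^ 4 - 4 * s ^ 2) t,
        deriv (fun s : ℝ => s ^ 5 - 10 * s) t) ≠ ((0 : ℝ), (0 : ℝ), (0 : ℝ)) := by
  refine ⟨shastri_trefoil_injective, fun t => ?_⟩
  have d₄ : deriv (fun s : ℝ => s ^ 4 - 4 * s ^ 2) t = 4 * t ^ 3 - 8 * t := by
    have h : HasDerivAt (fun s : ℝ => s ^ 4 - 4 * s ^ 2)
        (↑4 * t ^ (4 - 1) - 4 * (↑2 * t ^ (2 - 1))) t :=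
      (hasDerivAt_pow 4 t).sub ((hasDerivAt_pow 2 t).const_mul 4)
    rw [h.deriv]
    norm_num
    ring
  rw [deriv_pow_sub_const_mul, deriv_pow_sub_const_mul, d₄]
  norm_num only
  exact shastri_trefoil_deriv_ne_zero t
end

section
/- Let f(t) = 2(t−2)(t+4)(t²−11) and g(t) = t(t²−6)(t²−16). Then the plane curve t ↦ (f(t), g(t)) has exactly five double points; that is, there are exactly five unordered pairs {s,t} of distinct real numbers with f(s) = f(t) and g(s) = g(t). -/
noncomputable def Sfun (p : ℝ) : ℝ := p^6+6*p^5-28*p^4-82*p^3+47*p^2+200*p+100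
noncomputable def Cfun (p : ℝ) : ℝ := -4*p^4-16*p^3+140*p^2+328*p+176

lemma Sfun_cont : Continuous Sfun := by unfold Sfun; fun_prop

lemma exists_root_le (a b : ℝ) (hab : a ≤ b) (ha : Sfun a ≤ 0) (hb : 0 ≤ Sfun b) :
    ∃ r, r ∈ Set.Icc a b ∧ Sfun r = 0 := by
  obtain ⟨r, hr, hr0⟩ := intermediate_value_Icc hab Sfun_cont.continuousOn ⟨ha, hb⟩
  exact ⟨r, hr, hr0⟩

lemma exists_root_ge (a b : ℝ) (hab : a ≤ b) (ha : 0 ≤ Sfun a) (hb : Sfun b ≤ 0) :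
    ∃ r, r ∈ Set.Icc a b ∧ Sfun r = 0 := by
  obtain ⟨r, hr, hr0⟩ := intermediate_value_Icc' hab Sfun_cont.continuousOn ⟨hb, ha⟩
  exact ⟨r, hr, hr0⟩

open Polynomial in
noncomputable def Spoly : ℝ[X] :=
  X^6 + C 6 * X^5 - C 28 * X^4 - C 82 * X^3 + C 47 * X^2 + C 200 * X + C 100

lemma Spoly_eval (x : ℝ) : Spoly.eval x = Sfun x := by simp [Spoly, Sfun]

lemma Spoly_natDegree : Spoly.natDegree = 6 := by unfold Spoly; compute_degree!

lemma Spoly_ne_zero : Spoly ≠ 0 := by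
  intro h
  have := Spoly_eval 0
  rw [h] at this
  norm_num [Sfun] at this

lemma root_mem (r0 r1 r2 r3 r4 r5 : ℝ)
    (h0 : Sfun r0 = 0) (h1 : Sfun r1 = 0) (h2 : Sfun r2 = 0)
    (h3 : Sfun r3 = 0) (h4 : Sfun r4 = 0) (h5 : Sfun r5 = 0)
    (hd : ({r0, r1, r2, r3, r4, r5} : Finset ℝ).card = 6)
    (x : ℝ) (hx : Sfun x = 0) : x ∈ ({r0, r1, r2, r3, r4, r5} : Finset ℝ) := by
  set F : Finset ℝ := {r0, r1, r2, r3, r4, r5}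
  have hsub : F ⊆ Spoly.roots.toFinset := by
    intro y hy
    rw [Multiset.mem_toFinset, Polynomial.mem_roots Spoly_ne_zero]
    simp only [F, Finset.mem_insert, Finset.mem_singleton] at hy
    rcases hy with h|h|h|h|h|h <;> subst h <;>
      simp [Polynomial.IsRoot, Spoly_eval, h0, h1, h2, h3, h4, h5]
  have hle : Spoly.roots.toFinset.card ≤ 6 := by
    calc Spoly.roots.toFinset.card ≤ Multiset.card Spoly.roots := Spoly.roots.toFinset_card_le
    _ ≤ Spoly.natDegree := Spoly.card_roots'
    _ = 6 := Spoly_natDegree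
  have heq : F = Spoly.roots.toFinset := Finset.eq_of_subset_of_card_le hsub (by omega)
  rw [heq, Multiset.mem_toFinset, Polynomial.mem_roots Spoly_ne_zero]
  simp [Polynomial.IsRoot, Spoly_eval, hx]

lemma e1_st {s t : ℝ} (hst : s < t)
    (hf : 2*(s-2)*(s+4)*(s^2-11) = 2*(t-2)*(t+4)*(t^2-11)) :
    2*(s+t)^3-4*(s+t)*(s*t)+4*(s+t)^2-4*(s*t)-38*(s+t)-44 = 0 := by
  have hne : s - t ≠ 0 := sub_ne_zero.mpr hst.ne
  have key : (s-t) * (2*(s+t)^3-4*(s+t)*(s*t)+4*(s+t)^2-4*(s*t)-38*(s+t)-44) = 0 := by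
    linear_combination hf
  exact (mul_eq_zero.mp key).resolve_left hne

lemma e2_st {s t : ℝ} (hst : s < t)
    (hg : s*(s^2-6)*(s^2-16) = t*(t^2-6)*(t^2-16)) :
    (s+t)^4-3*(s+t)^2*(s*t)+(s*t)^2-22*(s+t)^2+22*(s*t)+96 = 0 := by
  have hne : s - t ≠ 0 := sub_ne_zero.mpr hst.ne
  have key : (s-t) * ((s+t)^4-3*(s+t)^2*(s*t)+(s*t)^2-22*(s+t)^2+22*(s*t)+96) = 0 := by
    linear_combination hg
  exact (mul_eq_zero.mp key).resolve_left hne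

lemma forward {s t : ℝ} (hst : s < t)
    (hf : 2*(s-2)*(s+4)*(s^2-11) = 2*(t-2)*(t+4)*(t^2-11))
    (hg : s*(s^2-6)*(s^2-16) = t*(t^2-6)*(t^2-16)) :
    Sfun (s+t) = 0 ∧ 0 < Cfun (s+t) := by
  have h1 := e1_st hst hf
  have h2 := e2_st hst hg
  have hS : Sfun (s+t) = 0 := by
    unfold Sfun
    linear_combination (-(2*(s+t)+2)^2) * h2 +
      (-(1:ℝ)/2*((2*(s+t)+2)*(s*t) + ((s+t)^3+2*(s+t)^2-19*(s+t)-22) +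
        (-3*(s+t)^2+22)*(2*(s+t)+2))) * h1
  have hpne : (s+t) + 1 ≠ 0 := by
    intro h
    have : (-4:ℝ) = 0 := by
      linear_combination h1 - (2*(s+t)^2+2*(s+t)-40-4*(s*t))*h
    norm_num at this
  have hC : 0 < Cfun (s+t) := by
    have hid : Cfun (s+t) = (2*(s+t)+2)^2*(s-t)^2 := by
      unfold Cfun
      linear_combination (-2*(2*(s+t)+2))*h1
    rw [hid]
    have h2p : 2*(s+t)+2 ≠ 0 := by intro h; apply hpne; linarith
    have hne : s - t ≠ 0 := sub_ne_zero.mpr hst.ne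
    positivity
  exact ⟨hS, hC⟩

lemma inj_core {s t s' t' : ℝ} (hst : s < t) (hst' : s' < t')
    (h1 : 2*(s+t)^3-4*(s+t)*(s*t)+4*(s+t)^2-4*(s*t)-38*(s+t)-44 = 0)
    (h1' : 2*(s'+t')^3-4*(s'+t')*(s'*t')+4*(s'+t')^2-4*(s'*t')-38*(s'+t')-44 = 0)
    (hps : s + t = s' + t') : s = s' ∧ t = t' := by
  have hpne : (s+t) + 1 ≠ 0 := by
    intro h
    have : (-4:ℝ) = 0 := by
      linear_combination h1 - (2*(s+t)^2+2*(s+t)-40-4*(s*t))*h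
    norm_num at this
  rw [← hps] at h1'
  have hq : s * t = s' * t' := by
    have key : (4*((s+t)+1)) * (s*t) = (4*((s+t)+1)) * (s'*t') := by
      linear_combination -h1 + h1'
    exact mul_left_cancel₀ (by intro h; apply hpne; linarith) key
  have key : (t - t') * (t + t' - (s + t)) = 0 := by
    linear_combination -hq + t'*hps
  have hpos : t + t' - (s + t) > 0 := by linarith
  have htt : t = t' := by
    rcases mul_eq_zero.mp key with h|h
    · linarith
    · linarith
  constructor <;> linarith

lemma surj {p : ℝ} (hS : Sfun p = 0) (hC : 0 < Cfun p) :
    ∃ s t : ℝ, s < t ∧ s + t = p ∧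
      2*(s-2)*(s+4)*(s^2-11) = 2*(t-2)*(t+4)*(t^2-11) ∧
      s*(s^2-6)*(s^2-16) = t*(t^2-6)*(t^2-16) := by
  have hpne : p + 1 ≠ 0 := by
    intro h
    have hp : p = -1 := by linarith
    rw [hp] at hS
    norm_num [Sfun] at hS
  have h2p : (2*p+2) ≠ 0 := by intro h; apply hpne; linarith
  obtain ⟨q, hq⟩ : ∃ q : ℝ, q*(2*p+2) = p^3+2*p^2-19*p-22 :=
    ⟨(p^3+2*p^2-19*p-22)/(2*p+2), div_mul_cancel₀ _ h2p⟩
  have h2ppos : 0 < (2*p+2)^2 := by positivity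
  have hid : Cfun p = (2*p+2)^2 * (p^2-4*q) := by
    unfold Cfun; linear_combination (4*(2*p+2))*hq
  have hdisc : 0 < p^2 - 4*q := by
    rw [hid] at hC
    by_contra h
    push_neg at h
    nlinarith
  set d : ℝ := Real.sqrt (p^2-4*q) with hddef
  have hd2 : d^2 = p^2-4*q := Real.sq_sqrt hdisc.le
  have hd0 : 0 < d := Real.sqrt_pos.mpr hdisc
  have h1 : 2*p^3-4*p*q+4*p^2-4*q-38*p-44 = 0 := by
    linear_combination (-2)*hq
  have h2 : p^4-3*p^2*q+q^2-22*p^2+22*q+96 = 0 := by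
    have key : (2*p+2)^2 * (p^4-3*p^2*q+q^2-22*p^2+22*q+96) = 0 := by
      unfold Sfun at hS
      linear_combination (-1)*hS +
        (-(1:ℝ)/2*((2*p+2)*q + (p^3+2*p^2-19*p-22) + (-3*p^2+22)*(2*p+2))) * h1
    exact (mul_eq_zero.mp key).resolve_left (pow_ne_zero 2 h2p)
  refine ⟨(p-d)/2, (p+d)/2, by linarith, by ring, ?_, ?_⟩ <;>
  · set s := (p-d)/2; set t := (p+d)/2
    have hsum : s + t = p := by simp only [s, t]; ring
    have hprod : s * t = q := by
      have h : s * t = (p^2 - d^2)/4 := by simp only [s, t]; ring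
      rw [h, hd2]; ring
    first
    | exact by
        linear_combination (s-t) * (by rw [hsum, hprod]; exact h1 :
          2*(s+t)^3-4*(s+t)*(s*t)+4*(s+t)^2-4*(s*t)-38*(s+t)-44 = 0)
    | exact by
        linear_combination (s-t) * (by rw [hsum, hprod]; exact h2 :
          (s+t)^4-3*(s+t)^2*(s*t)+(s*t)^2-22*(s+t)^2+22*(s*t)+96 = 0)

-- C sign lemmas
lemma C_neg0 {r : ℝ} (ha : -83/10 ≤ r) (hb : r ≤ -81/10) : Cfun r < 0 := by
  unfold Cfun
  nlinarith [mul_nonneg (sub_nonneg.mpr ha) (sub_nonneg.mpr hb), sq_nonneg (r+8), sq_nonneg r, sq_nonneg (r^2+8*r)]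
lemma C_pos1 {r : ℝ} (ha : -18/10 ≤ r) (hb : r ≤ -17/10) : 0 < Cfun r := by
  unfold Cfun
  nlinarith [mul_nonneg (sub_nonneg.mpr ha) (sub_nonneg.mpr hb), sq_nonneg (r+7/4), sq_nonneg r, sq_nonneg (r^2+2*r)]
lemma C_pos2 {r : ℝ} (ha : -13/10 ≤ r) (hb : r ≤ -12/10) : 0 < Cfun r := by
  unfold Cfun
  nlinarith [mul_nonneg (sub_nonneg.mpr ha) (sub_nonneg.mpr hb), sq_nonneg (r+5/4), sq_nonneg r, sq_nonneg (r^2+2*r)]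
lemma C_pos3 {r : ℝ} (ha : -8/10 ≤ r) (hb : r ≤ -7/10) : 0 < Cfun r := by
  unfold Cfun
  nlinarith [mul_nonneg (sub_nonneg.mpr ha) (sub_nonneg.mpr hb), sq_nonneg (r+3/4), sq_nonneg r, sq_nonneg (r^2+2*r)]
lemma C_pos4 {r : ℝ} (ha : 17/10 ≤ r) (hb : r ≤ 18/10) : 0 < Cfun r := by
  unfold Cfun
  nlinarith [mul_nonneg (sub_nonneg.mpr ha) (sub_nonneg.mpr hb), sq_nonneg (r-7/4), sq_nonneg r, sq_nonneg (r^2-2*r)]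
lemma C_pos5 {r : ℝ} (ha : 41/10 ≤ r) (hb : r ≤ 42/10) : 0 < Cfun r := by
  unfold Cfun
  nlinarith [mul_nonneg (sub_nonneg.mpr ha) (sub_nonneg.mpr hb), sq_nonneg (r-4), sq_nonneg r, sq_nonneg (r^2-4*r)]

lemma Bcard : {p : ℝ | Sfun p = 0 ∧ 0 < Cfun p}.ncard = 5 := by
  obtain ⟨r0, ⟨hr0a, hr0b⟩, hr0⟩ := exists_root_ge (-83/10) (-81/10) (by norm_num)
    (by norm_num [Sfun]) (by norm_num [Sfun])
  obtain ⟨r1, ⟨hr1a, hr1b⟩, hr1⟩ := exists_root_le (-18/10) (-17/10) (by norm_num)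
    (by norm_num [Sfun]) (by norm_num [Sfun])
  obtain ⟨r2, ⟨hr2a, hr2b⟩, hr2⟩ := exists_root_ge (-13/10) (-12/10) (by norm_num)
    (by norm_num [Sfun]) (by norm_num [Sfun])
  obtain ⟨r3, ⟨hr3a, hr3b⟩, hr3⟩ := exists_root_le (-8/10) (-7/10) (by norm_num)
    (by norm_num [Sfun]) (by norm_num [Sfun])
  obtain ⟨r4, ⟨hr4a, hr4b⟩, hr4⟩ := exists_root_ge (17/10) (18/10) (by norm_num)
    (by norm_num [Sfun]) (by norm_num [Sfun])
  obtain ⟨r5, ⟨hr5a, hr5b⟩, hr5⟩ := exists_root_le (41/10) (42/10) (by norm_num)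
    (by norm_num [Sfun]) (by norm_num [Sfun])
  have h01 : r0 < r1 := by linarith
  have h12 : r1 < r2 := by linarith
  have h23 : r2 < r3 := by linarith
  have h34 : r3 < r4 := by linarith
  have h45 : r4 < r5 := by linarith
  have h02 : r0 < r2 := by linarith
  have h03 : r0 < r3 := by linarith
  have h04 : r0 < r4 := by linarith
  have h05 : r0 < r5 := by linarith
  have h13 : r1 < r3 := by linarith
  have h14 : r1 < r4 := by linarith
  have h15 : r1 < r5 := by linarith
  have h24 : r2 < r4 := by linarith
  have h25 : r2 < r5 := by linarith
  have h35 : r3 < r5 := by linarith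
  have hm0 : r0 ∉ ({r1,r2,r3,r4,r5} : Finset ℝ) := by
    simp only [Finset.mem_insert, Finset.mem_singleton]
    push_neg
    exact ⟨h01.ne, h02.ne, h03.ne, h04.ne, h05.ne⟩
  have hm1 : r1 ∉ ({r2,r3,r4,r5} : Finset ℝ) := by
    simp only [Finset.mem_insert, Finset.mem_singleton]
    push_neg
    exact ⟨h12.ne, h13.ne, h14.ne, h15.ne⟩
  have hm2 : r2 ∉ ({r3,r4,r5} : Finset ℝ) := by
    simp only [Finset.mem_insert, Finset.mem_singleton]
    push_neg
    exact ⟨h23.ne, h24.ne, h25.ne⟩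
  have hm3 : r3 ∉ ({r4,r5} : Finset ℝ) := by
    simp only [Finset.mem_insert, Finset.mem_singleton]
    push_neg
    exact ⟨h34.ne, h35.ne⟩
  have hm4 : r4 ∉ ({r5} : Finset ℝ) := by
    simp only [Finset.mem_singleton]
    exact h45.ne
  have hd : ({r0, r1, r2, r3, r4, r5} : Finset ℝ).card = 6 := by
    rw [Finset.card_insert_of_notMem hm0, Finset.card_insert_of_notMem hm1,
      Finset.card_insert_of_notMem hm2, Finset.card_insert_of_notMem hm3,
      Finset.card_insert_of_notMem hm4, Finset.card_singleton]
  have hBeq : {p : ℝ | Sfun p = 0 ∧ 0 < Cfun p} = ↑({r1,r2,r3,r4,r5} : Finset ℝ) := by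
    ext x
    simp only [Set.mem_setOf_eq, Finset.coe_insert, Finset.coe_singleton,
      Set.mem_insert_iff, Set.mem_singleton_iff]
    constructor
    · rintro ⟨hx, hc⟩
      have := root_mem r0 r1 r2 r3 r4 r5 hr0 hr1 hr2 hr3 hr4 hr5 hd x hx
      simp only [Finset.mem_insert, Finset.mem_singleton] at this
      rcases this with h|h|h|h|h|h
      · exfalso
        subst h
        exact absurd hc (not_lt.mpr (C_neg0 hr0a hr0b).le)
      all_goals tauto
    · rintro (h|h|h|h|h) <;> subst h
      · exact ⟨hr1, C_pos1 hr1a hr1b⟩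
      · exact ⟨hr2, C_pos2 hr2a hr2b⟩
      · exact ⟨hr3, C_pos3 hr3a hr3b⟩
      · exact ⟨hr4, C_pos4 hr4a hr4b⟩
      · exact ⟨hr5, C_pos5 hr5a hr5b⟩
  rw [hBeq, Set.ncard_coe_finset]
  rw [Finset.card_insert_of_notMem hm1, Finset.card_insert_of_notMem hm2,
    Finset.card_insert_of_notMem hm3, Finset.card_insert_of_notMem hm4,
    Finset.card_singleton]

/-- The plane curve `t ↦ (f t, g t)` with `f t = 2(t−2)(t+4)(t²−11)` and
`g t = t(t²−6)(t²−16)` has exactly five double points: there are exactly five pairs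
`(s, t)` with `s < t`, `f s = f t` and `g s = g t`. -/
theorem stmt_19 :
    {p : ℝ × ℝ | p.1 < p.2 ∧
      2 * (p.1 - 2) * (p.1 + 4) * (p.1 ^ 2 - 11) = 2 * (p.2 - 2) * (p.2 + 4) * (p.2 ^ 2 - 11) ∧
      p.1 * (p.1 ^ 2 - 6) * (p.1 ^ 2 - 16) = p.2 * (p.2 ^ 2 - 6) * (p.2 ^ 2 - 16)}.ncard
      = 5 := by
  set A : Set (ℝ × ℝ) := {p : ℝ × ℝ | p.1 < p.2 ∧
      2 * (p.1 - 2) * (p.1 + 4) * (p.1 ^ 2 - 11) = 2 * (p.2 - 2) * (p.2 + 4) * (p.2 ^ 2 - 11) ∧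
      p.1 * (p.1 ^ 2 - 6) * (p.1 ^ 2 - 16) = p.2 * (p.2 ^ 2 - 6) * (p.2 ^ 2 - 16)} with hA
  set φ : ℝ × ℝ → ℝ := fun pr => pr.1 + pr.2 with hφ
  have hinj : Set.InjOn φ A := by
    rintro ⟨s, t⟩ ⟨hst, hf, hg⟩ ⟨s', t'⟩ ⟨hst', hf', hg'⟩ hp
    simp only [hφ] at hp
    simp only [hA, Set.mem_setOf_eq] at hst hf hg hst' hf' hg' ⊢
    have h1 := e1_st hst (by linear_combination hf)
    have h1' := e1_st hst' (by linear_combination hf')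
    obtain ⟨hs, ht⟩ := inj_core hst hst' h1 h1' hp
    simp [hs, ht]
  have himg : φ '' A = {p : ℝ | Sfun p = 0 ∧ 0 < Cfun p} := by
    ext p
    constructor
    · rintro ⟨⟨s, t⟩, ⟨hst, hf, hg⟩, rfl⟩
      exact forward hst (by linear_combination hf) (by linear_combination hg)
    · rintro ⟨hS, hC⟩
      obtain ⟨s, t, hst, hsum, hf, hg⟩ := surj hS hC
      exact ⟨(s, t), ⟨hst, by linear_combination hf, by linear_combination hg⟩, hsum⟩
  have := Set.ncard_image_of_injOn hinj
  rw [himg, Bcard] at this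
  exact this.symm
end
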